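/- Let T ⊂ S be local orders in a simple Artinian ring Q with the same prime ideals, and let M be the common maximal ideal. Then each non-principal right divisorial ideal I of T is a right fractional ideal of S (i.e., IS ⊆ I) of at least one of the following types: (1) I = xM for some nonzero x in Q; (2) I is a right divisorial ideal of S. -/

import Mathlib

/-! Basic notions for orders in a simple Artinian ring, following Halimi,
"Right Mori orders". Throughout, `Q` is a ring and `S` a subring of `Q`. -/

section Preamble

variable {Q : Type*} [Ring Q]

/-- `a` is a regular element of the subring `S` of `Q`, i.e. `a ∈ S` and `a` is
neither a left nor a right zero divisor in `S`. -/
def IsRegularElemIn (S : Subring Q) (a : Q) : Prop :=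
  a ∈ S ∧ (∀ b ∈ S, a * b = 0 → b = 0) ∧ (∀ b ∈ S, b * a = 0 → b = 0)

/-- `S` is an order in `Q`: every regular element of `S` is a unit of `Q` and every
element of `Q` is both a left fraction and a right fraction over `S`. -/
def IsOrderIn (S : Subring Q) : Prop :=
  (∀ a : Q, IsRegularElemIn S a → IsUnit a) ∧
  (∀ q : Q, ∃ a b : Q, a ∈ S ∧ IsRegularElemIn S b ∧ b * q = a) ∧
  (∀ q : Q, ∃ a b : Q, a ∈ S ∧ IsRegularElemIn S b ∧ q * b = a)

/-- A subset of `Q` that is a right `S`-submodule of `Q`. -/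
def IsRightModSet (S : Subring Q) (I : Set Q) : Prop :=
  (0 : Q) ∈ I ∧ (∀ x ∈ I, ∀ y ∈ I, x + y ∈ I) ∧ (∀ x ∈ I, -x ∈ I) ∧
    ∀ x ∈ I, ∀ s ∈ S, x * s ∈ I

/-- A subset of `Q` that is a left `S`-submodule of `Q`. -/
def IsLeftModSet (S : Subring Q) (I : Set Q) : Prop :=
  (0 : Q) ∈ I ∧ (∀ x ∈ I, ∀ y ∈ I, x + y ∈ I) ∧ (∀ x ∈ I, -x ∈ I) ∧
    ∀ x ∈ I, ∀ s ∈ S, s * x ∈ I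

/-- A (integral) right ideal of `S`, viewed as a subset of `Q`. -/
def IsRightIdealSet (S : Subring Q) (I : Set Q) : Prop :=
  IsRightModSet S I ∧ I ⊆ (S : Set Q)

/-- A (integral) left ideal of `S`, viewed as a subset of `Q`. -/
def IsLeftIdealSet (S : Subring Q) (I : Set Q) : Prop :=
  IsLeftModSet S I ∧ I ⊆ (S : Set Q)

/-- `(A : B)_r = {q ∈ Q : B q ⊆ A}`. -/
def colonR (A B : Set Q) : Set Q := {q : Q | ∀ b ∈ B, b * q ∈ A}

/-- `(A : B)_l = {q ∈ Q : q B ⊆ A}`. -/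
def colonL (A B : Set Q) : Set Q := {q : Q | ∀ b ∈ B, q * b ∈ A}

/-- `I^ν = (S : (S : I)_l)_r`. -/
def nuR (S : Subring Q) (I : Set Q) : Set Q := colonR (S : Set Q) (colonL (S : Set Q) I)

/-- `^ν I = (S : (S : I)_r)_l`. -/
def nuL (S : Subring Q) (I : Set Q) : Set Q := colonL (S : Set Q) (colonR (S : Set Q) I)

/-- A (fractional) right `S`-ideal: a right `S`-submodule of `Q` containing a regular
element of `S` and with `uI ⊆ S` for some unit `u` of `Q`. -/
def IsRightSIdeal (S : Subring Q) (I : Set Q) : Prop :=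
  IsRightModSet S I ∧ (∃ a ∈ I, IsRegularElemIn S a) ∧
    ∃ u : Qˣ, ∀ x ∈ I, (u : Q) * x ∈ S

/-- A (fractional) left `S`-ideal. -/
def IsLeftSIdeal (S : Subring Q) (I : Set Q) : Prop :=
  IsLeftModSet S I ∧ (∃ a ∈ I, IsRegularElemIn S a) ∧
    ∃ u : Qˣ, ∀ x ∈ I, x * (u : Q) ∈ S

/-- A completely prime right ideal of `S`: a proper right ideal `P` such that for all
`a, b ∈ S`, `aP ⊆ P` and `ab ∈ P` imply `a ∈ P` or `b ∈ P`. -/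
def IsCompletelyPrimeRightIdeal (S : Subring Q) (P : Set Q) : Prop :=
  IsRightIdealSet S P ∧ P ≠ (S : Set Q) ∧
    ∀ a ∈ S, ∀ b ∈ S, (∀ p ∈ P, a * p ∈ P) → a * b ∈ P → a ∈ P ∨ b ∈ P

/-- The right `S`-submodule of `Q` generated by a set `G`. -/
def rightSpan (S : Subring Q) (G : Set Q) : Set Q :=
  ⋂₀ {J : Set Q | IsRightModSet S J ∧ G ⊆ J}

/-- The left `S`-submodule of `Q` generated by a set `G`. -/
def leftSpan (S : Subring Q) (G : Set Q) : Set Q :=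
  ⋂₀ {J : Set Q | IsLeftModSet S J ∧ G ⊆ J}

/-- `I` is a finitely generated right `S`-submodule of `Q`. -/
def IsFGRightModSet (S : Subring Q) (I : Set Q) : Prop :=
  ∃ G : Finset Q, I = rightSpan S ↑G

/-- The ascending chain condition on regular integral right divisorial ideals of `S`. -/
def ACCRightDivisorial (S : Subring Q) : Prop :=
  ∀ f : ℕ → Set Q,
    (∀ n, IsRightIdealSet S (f n) ∧ (∃ a ∈ f n, IsRegularElemIn S a) ∧ nuR S (f n) = f n) →
    (∀ n, f n ⊆ f (n + 1)) → ∃ N, ∀ n, N ≤ n → f n = f N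

/-- The ascending chain condition on regular integral left divisorial ideals of `S`. -/
def ACCLeftDivisorial (S : Subring Q) : Prop :=
  ∀ f : ℕ → Set Q,
    (∀ n, IsLeftIdealSet S (f n) ∧ (∃ a ∈ f n, IsRegularElemIn S a) ∧ nuL S (f n) = f n) →
    (∀ n, f n ⊆ f (n + 1)) → ∃ N, ∀ n, N ≤ n → f n = f N

/-- A right Mori order: an order satisfying the ACC on regular integral right
divisorial ideals. -/
def IsRightMori (S : Subring Q) : Prop := IsOrderIn S ∧ ACCRightDivisorial S

/-- The principal right ideal `aS` of `S`, as a subset of `Q`. -/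
def principalRight (S : Subring Q) (a : Q) : Set Q := {x : Q | ∃ s ∈ S, x = a * s}

/-- The principal left ideal `Sa` of `S`, as a subset of `Q`. -/
def principalLeft (S : Subring Q) (a : Q) : Set Q := {x : Q | ∃ s ∈ S, x = s * a}

/-- A two-sided (integral) ideal of `S`, as a subset of `Q`. -/
def IsTwoSidedIdealSet (S : Subring Q) (I : Set Q) : Prop :=
  IsRightModSet S I ∧ IsLeftModSet S I ∧ I ⊆ (S : Set Q)

/-- A maximal (proper) right ideal of `S`. -/
def IsMaxRightIdeal (S : Subring Q) (M : Set Q) : Prop :=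
  IsRightIdealSet S M ∧ M ≠ (S : Set Q) ∧
    ∀ N, IsRightIdealSet S N → N ≠ (S : Set Q) → M ⊆ N → N = M

/-- A maximal (proper) left ideal of `S`. -/
def IsMaxLeftIdeal (S : Subring Q) (M : Set Q) : Prop :=
  IsLeftIdealSet S M ∧ M ≠ (S : Set Q) ∧
    ∀ N, IsLeftIdealSet S N → N ≠ (S : Set Q) → M ⊆ N → N = M

/-- `S` is local with (Jacobson radical) `M`: `M` is a two-sided ideal which is the
only maximal right ideal and the only maximal left ideal of `S`. -/
def IsLocalWithMax (S : Subring Q) (M : Set Q) : Prop :=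
  IsTwoSidedIdealSet S M ∧
    IsMaxRightIdeal S M ∧ (∀ N, IsMaxRightIdeal S N → N = M) ∧
    IsMaxLeftIdeal S M ∧ (∀ N, IsMaxLeftIdeal S N → N = M)

/-- A local order. -/
def IsLocalOrder (S : Subring Q) : Prop := IsOrderIn S ∧ ∃ M : Set Q, IsLocalWithMax S M

/-- The additive span of the set of products `a * b` with `a ∈ A`, `b ∈ B`. -/
def mulSpan (A B : Set Q) : Set Q :=
  (AddSubgroup.closure {x : Q | ∃ a ∈ A, ∃ b ∈ B, x = a * b} : AddSubgroup Q)

/-- Powers `M^n` of an ideal `M` of `S` (with `M^0 = S`). -/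
def idealPow (S : Subring Q) (M : Set Q) : ℕ → Set Q
  | 0 => (S : Set Q)
  | n + 1 => mulSpan M (idealPow S M n)

/-- A right `τ`-ideal of `S`: a right ideal `J` such that `F^ν ⊆ J` for every finitely
generated right ideal `F ⊆ J`. -/
def IsRightTauIdeal (S : Subring Q) (J : Set Q) : Prop :=
  IsRightIdealSet S J ∧
    ∀ F : Set Q, IsRightIdealSet S F → IsFGRightModSet S F → F ⊆ J → nuR S F ⊆ J

/-- A maximal (proper) right `τ`-ideal of `S`. -/
def IsMaxRightTauIdeal (S : Subring Q) (M : Set Q) : Prop :=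
  IsRightTauIdeal S M ∧ M ≠ (S : Set Q) ∧
    ∀ N, IsRightTauIdeal S N → N ≠ (S : Set Q) → M ⊆ N → N = M

/-- A prime (two-sided) ideal of the order `S`. -/
def IsPrimeIdealSet (S : Subring Q) (P : Set Q) : Prop :=
  IsTwoSidedIdealSet S P ∧ P ≠ (S : Set Q) ∧
    ∀ a ∈ S, ∀ b ∈ S, (∀ s ∈ S, a * s * b ∈ P) → a ∈ P ∨ b ∈ P

/-- A divisorial two-sided (integral) ideal of `S`: `I = I^ν = ^ν I`. -/
def IsDivisorialIdealSet (S : Subring Q) (I : Set Q) : Prop :=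
  IsTwoSidedIdealSet S I ∧ nuR S I = I ∧ nuL S I = I

/-- `D_m(S)`: the set of maximal divisorial (two-sided, integral) ideals of `S`. -/
def maxDivisorialIdeals (S : Subring Q) : Set (Set Q) :=
  {P | IsDivisorialIdealSet S P ∧ P ≠ (S : Set Q) ∧
    ∀ J, IsDivisorialIdealSet S J → J ≠ (S : Set Q) → P ⊆ J → J = P}

/-- `c` is regular modulo the ideal `P` of `S`. -/
def IsRegularModP (S : Subring Q) (P : Set Q) (c : Q) : Prop :=
  c ∈ S ∧ (∀ b ∈ S, c * b ∈ P → b ∈ P) ∧ (∀ b ∈ S, b * c ∈ P → b ∈ P)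

/-- The left order `O_l(M) = {q ∈ Q : qM ⊆ M}` of `M`. -/
def leftOrderOf (M : Set Q) : Set Q := {q : Q | ∀ m ∈ M, q * m ∈ M}

/-- `s` is a unit of the subring `R` of `Q`. -/
def IsUnitIn (R : Subring Q) (s : Q) : Prop :=
  s ∈ R ∧ ∃ t ∈ R, s * t = 1 ∧ t * s = 1

/-- A family of overrings `S = ⋂ᵢ Sᵢ` is of finite character if every nonzero
non-unit of `S` is a non-unit of only finitely many `Sᵢ`. -/
def FiniteCharacter {α : Type*} (S : Subring Q) (F : α → Subring Q) : Prop :=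
  ∀ s ∈ S, s ≠ 0 → ¬IsUnitIn S s → {i : α | ¬IsUnitIn (F i) s}.Finite

/-- `S` is right pseudo-coherent: any (nonempty) finite intersection of principal
right ideals of `S` is a finitely generated right ideal. -/
def RightPseudoCoherent (S : Subring Q) : Prop :=
  ∀ F : Finset Q, ↑F ⊆ (S : Set Q) → F.Nonempty →
    IsFGRightModSet S (⋂ a ∈ F, principalRight S a)

/-- `A :_r x = {s ∈ S : x s ∈ A}`. -/
def colonByElemR (S : Subring Q) (A : Set Q) (x : Q) : Set Q :=
  {s : Q | s ∈ S ∧ x * s ∈ A}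

/-- A `ν`-irreducible right ideal: a right divisorial right ideal which is not the
intersection of two right divisorial right ideals properly containing it. -/
def IsNuIrreducible (S : Subring Q) (I : Set Q) : Prop :=
  IsRightIdealSet S I ∧ nuR S I = I ∧
    ¬∃ A B : Set Q, (IsRightIdealSet S A ∧ nuR S A = A) ∧
      (IsRightIdealSet S B ∧ nuR S B = B) ∧ I ⊂ A ∧ I ⊂ B ∧ I = A ∩ B

/-- A non-commutative (rank one) discrete valuation ring inside `Q`. -/
def IsNCDVR (R : Subring Q) : Prop :=
  IsOrderIn R ∧ ∃ M : Set Q, IsLocalWithMax R M ∧ M ≠ ({0} : Set Q) ∧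
    (∃ p : Q, IsRegularElemIn R p ∧ M = principalRight R p ∧ M = principalLeft R p) ∧
    (⋂ n : ℕ, idealPow R M n) = ({0} : Set Q)

/-- A Krull order in the sense of Marubayashi. -/
def IsKrullOrder (S : Subring Q) : Prop :=
  ∃ (A : Set (Subring Q)) (B : Finset (Subring Q)),
    (∀ R ∈ A, (S : Set Q) ⊆ ↑R ∧ IsNCDVR R) ∧
    (∀ T ∈ B, (S : Set Q) ⊆ ↑T ∧ IsSimpleRing T ∧ IsNoetherianRing T) ∧
    ((S : Set Q) = (⋂ R ∈ A, (R : Set Q)) ∩ ⋂ T ∈ B, (T : Set Q)) ∧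
    ∀ c : Q, IsRegularElemIn S c →
      {R ∈ A | principalRight R c ≠ (R : Set Q)}.Finite ∧
      {R ∈ A | principalLeft R c ≠ (R : Set Q)}.Finite

end Preamble

/-! In a local ring an element outside the maximal ideal `M` is a unit, so if `q x ∉ M` for
some `q ∈ (R : I)_l` and `x ∈ I`, then `I = xR`. For the non-principal `I` this gives
`(T : I)_l I ⊆ M`; as `M` is an `S`-ideal inside `T`, `I S ⊆ I^ν = I`. If `(S : I)_l I ⊄ M`, the
same argument over `S` makes `I` principal, hence divisorial, over `S`. Otherwise
`(S : I)_l = (T : I)_l`, so either `(T : I)_l I^{ν_S} ⊆ M ⊆ T` and `I^{ν_S} ⊆ I^{ν_T} = I`, or some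
`q z ∉ M` with `z ∈ I^{ν_S}` is a unit of `S`, which yields `w` with `q w = w q = 1` and `I = wM`.
One-sided inverses in `Q` are two-sided since Artinian rings are Dedekind-finite. -/

section LocalSubring

variable {Q : Type*} [Ring Q] {R : Subring Q}

theorem subset_nuR (I : Set Q) : I ⊆ nuR R I := fun _ hy _ hq => hq _ hy

def IsLeftIdealSet.toIdeal {N : Set Q} (hN : IsLeftIdealSet R N) : Ideal R where
  carrier := {a | (a : Q) ∈ N}
  add_mem' ha hb := hN.1.2.1 _ ha _ hb
  zero_mem' := hN.1.1
  smul_mem' c _ ha := hN.1.2.2.2 _ ha _ c.2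

theorem isLeftIdealSet_image_ideal (J : Ideal R) :
    IsLeftIdealSet R (Subtype.val '' (J : Set R)) := by
  refine ⟨⟨⟨0, J.zero_mem, rfl⟩, ?_, ?_, ?_⟩, Set.image_subset_iff.mpr fun a _ => a.2⟩
  · rintro _ ⟨a, ha, rfl⟩ _ ⟨b, hb, rfl⟩
    exact ⟨a + b, J.add_mem ha hb, rfl⟩
  · rintro _ ⟨a, ha, rfl⟩
    exact ⟨-a, J.neg_mem ha, rfl⟩
  · rintro _ ⟨a, ha, rfl⟩ s hs
    exact ⟨⟨s, hs⟩ * a, J.mul_mem_left _ ha, rfl⟩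

theorem isMaxLeftIdeal_image_of_isMaximal {J : Ideal R} (hJ : J.IsMaximal) :
    IsMaxLeftIdeal R (Subtype.val '' (J : Set R)) := by
  refine ⟨isLeftIdealSet_image_ideal J, fun hJR => ?_, fun N hN hNR hJN => ?_⟩
  · obtain ⟨a, ha, ha1⟩ : (1 : Q) ∈ Subtype.val '' (J : Set R) := hJR ▸ R.one_mem
    rw [show a = 1 from Subtype.ext ha1] at ha
    exact hJ.ne_top ((Ideal.eq_top_iff_one J).mpr ha)
  · have hN_ne_top : hN.toIdeal ≠ ⊤ := fun htop => hNR <| hN.2.antisymm fun s hs => by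
      simpa using hN.1.2.2.2 1 (Ideal.eq_top_iff_one _ |>.mp htop) s hs
    have hJN' : J = hN.toIdeal := hJ.eq_of_le hN_ne_top fun a ha => hJN ⟨a, ha, rfl⟩
    ext x
    exact ⟨fun hx => ⟨⟨x, hN.2 hx⟩, hJN' ▸ hx, rfl⟩, (hJN ·)⟩

theorem IsLocalWithMax.exists_mul_eq_one {M : Set Q} (h : IsLocalWithMax R M) {t : Q}
    (ht : t ∈ R) (htM : t ∉ M) : ∃ s ∈ R, s * t = 1 := by
  by_contra! hno
  have hspan : Ideal.span {(⟨t, ht⟩ : R)} ≠ ⊤ := by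
    rw [Ne, Ideal.eq_top_iff_one, Ideal.mem_span_singleton']
    rintro ⟨s, hs⟩
    exact hno s s.2 (congrArg Subtype.val hs)
  obtain ⟨J, hJ, htJ⟩ := Ideal.exists_le_maximal _ hspan
  apply htM
  rw [← h.2.2.2.2 _ (isMaxLeftIdeal_image_of_isMaximal hJ)]
  exact ⟨_, htJ (Ideal.mem_span_singleton_self _), rfl⟩

variable [IsDedekindFiniteMonoid Q] {M I : Set Q}

theorem IsLocalWithMax.eq_principalRight_of_mul_notMem (h : IsLocalWithMax R M)
    (hI : ∀ y ∈ I, ∀ s ∈ R, y * s ∈ I) {q x : Q} (hq : q ∈ colonL R I) (hx : x ∈ I)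
    (hqx : q * x ∉ M) : IsUnit x ∧ I = principalRight R x := by
  obtain ⟨s, hs, hsqx⟩ := h.exists_mul_eq_one (hq x hx) hqx
  have hvx : s * q * x = 1 := by rw [mul_assoc, hsqx]
  have hxv : x * (s * q) = 1 := mul_eq_one_comm.mp hvx
  refine ⟨⟨⟨x, s * q, hxv, hvx⟩, rfl⟩, Set.Subset.antisymm (fun y hy => ?_) ?_⟩
  · refine ⟨s * q * y, by rw [mul_assoc]; exact R.mul_mem hs (hq y hy), ?_⟩
    rw [← mul_assoc, hxv, one_mul]
  · rintro _ ⟨r, hr, rfl⟩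
    exact hI x hx r hr

theorem IsLocalWithMax.colonL_mul_mem_of_not_principal (h : IsLocalWithMax R M)
    (hI : ∀ y ∈ I, ∀ s ∈ R, y * s ∈ I) (hnp : ¬∃ x : Q, I = principalRight R x) :
    ∀ q ∈ colonL R I, ∀ x ∈ I, q * x ∈ M := fun _ hq x hx => by
  by_contra hqx
  exact hnp ⟨x, (h.eq_principalRight_of_mul_notMem hI hq hx hqx).2⟩

end LocalSubring

section Overring

variable {Q : Type*} [Ring Q] {T S : Subring Q} {M I : Set Q}

theorem nuR_principalRight_of_isUnit {x : Q} (hx : IsUnit x) :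
    nuR S (principalRight S x) = principalRight S x := by
  obtain ⟨⟨x, v, hxv, hvx⟩, rfl⟩ := hx
  have hv : v ∈ colonL S (principalRight S x) := by
    rintro _ ⟨s, hs, rfl⟩
    rwa [← mul_assoc, hvx, one_mul]
  refine (subset_nuR _).antisymm' fun z hz => ⟨v * z, hz v hv, ?_⟩
  rw [← mul_assoc, hxv, one_mul]

theorem mul_mem_of_colonL_mul_subset (hMT : M ⊆ T) (hMS : ∀ m ∈ M, ∀ s ∈ S, m * s ∈ M)
    (hdiv : nuR T I = I) (hTI : ∀ q ∈ colonL T I, ∀ x ∈ I, q * x ∈ M) :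
    ∀ x ∈ I, ∀ s ∈ S, x * s ∈ I := fun x hx s hs => hdiv ▸ fun q hq => by
  rw [← mul_assoc]
  exact hMT (hMS _ (hTI q hq x hx) s hs)

theorem eq_mul_max_of_mul_eq_one (hMT : M ⊆ T) (hSM : ∀ m ∈ M, ∀ s ∈ S, s * m ∈ M)
    (hdiv : nuR T I = I) (hTI : ∀ q ∈ colonL T I, ∀ x ∈ I, q * x ∈ M) {q w : Q}
    (hq : q ∈ colonL T I) (hwq : w * q = 1) (hw : ∀ p ∈ colonL T I, p * w ∈ S) :
    I = {y : Q | ∃ m ∈ M, y = w * m} := by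
  refine Set.Subset.antisymm (fun y hy => ⟨q * y, hTI q hq y hy, ?_⟩) ?_
  · rw [← mul_assoc, hwq, one_mul]
  · rintro _ ⟨m, hm, rfl⟩
    rw [← hdiv]
    intro p hp
    rw [← mul_assoc]
    exact hMT (hSM m hm _ (hw p hp))

variable [IsDedekindFiniteMonoid Q] [Nontrivial Q]

theorem eq_mul_max_or_nuR_eq_of_colonL_mul_subset (hTS : (T : Set Q) ⊆ S)
    (hMS : IsLocalWithMax S M) (hMT : M ⊆ T) (hdiv : nuR T I = I)
    (hSI : ∀ q ∈ colonL S I, ∀ x ∈ I, q * x ∈ M) :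
    (∃ x : Q, x ≠ 0 ∧ I = {y : Q | ∃ m ∈ M, y = x * m}) ∨ nuR S I = I := by
  have hcolon : colonL T I = colonL S I := Set.Subset.antisymm
    (fun q hq x hx => hTS (hq x hx)) (fun q hq x hx => hMT (hSI q hq x hx))
  by_cases hν : ∀ q ∈ colonL T I, ∀ z ∈ nuR S I, q * z ∈ M
  · refine Or.inr ((subset_nuR I).antisymm' fun z hz => ?_)
    exact hdiv ▸ fun q hq => hMT (hν q hq z hz)
  push Not at hν
  obtain ⟨q, hq, z, hz, hqz⟩ := hν
  have hzS : ∀ p ∈ colonL T I, p * z ∈ S := fun p hp => hz p (hcolon ▸ hp)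
  obtain ⟨s, hs, hsqz⟩ := hMS.exists_mul_eq_one (hzS q hq) hqz
  have hqw : q * (z * s) = 1 := by rw [← mul_assoc]; exact mul_eq_one_comm.mp hsqz
  have hwq : z * s * q = 1 := mul_eq_one_comm.mp hqw
  refine Or.inl ⟨z * s, left_ne_zero_of_mul_eq_one hwq, ?_⟩
  refine eq_mul_max_of_mul_eq_one hMT hMS.1.2.1.2.2.2 hdiv (fun p hp => hSI p (hcolon ▸ hp))
    hq hwq fun p hp => ?_
  rw [← mul_assoc]
  exact S.mul_mem (hzS p hp) hs

end Overring

theorem nonPrincipalRightDivisorial_ascends_general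
    {Q : Type*} [Ring Q] [IsSimpleRing Q] [IsArtinianRing Q]
    (T S : Subring Q)
    (hTS : (T : Set Q) ⊂ (S : Set Q)) (M : Set Q)
    (hMT : IsLocalWithMax T M) (hMS : IsLocalWithMax S M)
    (I : Set Q) (hI : IsRightSIdeal T I) (hdiv : nuR T I = I)
    (hnp : ¬∃ x : Q, I = principalRight T x) :
    (∀ x ∈ I, ∀ s ∈ S, x * s ∈ I) ∧
    ((∃ x : Q, x ≠ 0 ∧ I = {y : Q | ∃ m ∈ M, y = x * m}) ∨ nuR S I = I) := by
  have hMT_sub : M ⊆ T := hMT.1.2.2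
  have hIS : ∀ x ∈ I, ∀ s ∈ S, x * s ∈ I := mul_mem_of_colonL_mul_subset hMT_sub
    hMS.1.1.2.2.2 hdiv (hMT.colonL_mul_mem_of_not_principal hI.1.2.2.2 hnp)
  refine ⟨hIS, ?_⟩
  by_cases hSI : ∀ q ∈ colonL S I, ∀ x ∈ I, q * x ∈ M
  · exact eq_mul_max_or_nuR_eq_of_colonL_mul_subset hTS.1 hMS hMT_sub hdiv hSI
  push Not at hSI
  obtain ⟨q, hq, x, hx, hqx⟩ := hSI
  obtain ⟨hx_unit, rfl⟩ := hMS.eq_principalRight_of_mul_notMem hIS hq hx hqx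
  exact Or.inr (nuR_principalRight_of_isUnit hx_unit)

/-- Proposition 3.4. Let `T ⊂ S` be local orders in a simple Artinian
ring `Q` with the same prime ideals and common maximal ideal `M`. Then each
non-principal right divisorial ideal `I` of `T` is a right fractional ideal of `S`
(`IS ⊆ I`) which is of the form `xM` for some `0 ≠ x ∈ Q`, or is a right divisorial
ideal of `S`. -/
theorem nonPrincipalRightDivisorial_ascends
    {Q : Type*} [Ring Q] [IsSimpleRing Q] [IsArtinianRing Q]
    (T S : Subring Q) (hT : IsOrderIn T) (hS : IsOrderIn S)
    (hTS : (T : Set Q) ⊂ (S : Set Q)) (M : Set Q)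
    (hMT : IsLocalWithMax T M) (hMS : IsLocalWithMax S M)
    (hprimes : ∀ P : Set Q, IsPrimeIdealSet T P ↔ IsPrimeIdealSet S P)
    (I : Set Q) (hI : IsRightSIdeal T I) (hdiv : nuR T I = I)
    (hnp : ¬∃ x : Q, I = principalRight T x) :
    (∀ x ∈ I, ∀ s ∈ S, x * s ∈ I) ∧
    ((∃ x : Q, x ≠ 0 ∧ I = {y : Q | ∃ m ∈ M, y = x * m}) ∨ nuR S I = I) :=
  nonPrincipalRightDivisorial_ascends_general T S hTS M hMT hMS I hI hdiv hnp
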